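/- Let B* ∈ ℝ^{m×p₂} have rank r with compact singular value decomposition B* = UΣVᵀ, where U ∈ ℝ^{m×r} and V ∈ ℝ^{p₂×r} have orthonormal columns, and let T₀ = {B ∈ ℝ^{m×p₂} : (I − UUᵀ)B(I − VVᵀ) = 0}. Let E ∈ ℝ^{m×p₂} satisfy ‖B* + E‖_* ≤ ‖B*‖_*, and let E₀ denote the orthogonal projection of E onto the subspace T₀ with respect to the trace inner product. Then ‖E − E₀‖_* ≤ ‖E₀‖_* and ‖E₀‖_* ≤ √(2r)‖E₀‖_F. -/

import Mathlib

noncomputable section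
open MeasureTheory Matrix

/-- Frobenius norm of a real matrix. -/
def frobNorm {a b : ℕ} (X : Matrix (Fin a) (Fin b) ℝ) : ℝ :=
  Real.sqrt (∑ i, ∑ j, (X i j) ^ 2)

/-- Euclidean norm of a vector. -/
def l2Norm {n : ℕ} (v : Fin n → ℝ) : ℝ :=
  Real.sqrt (∑ i, (v i) ^ 2)

/-- Sum of Euclidean norms of the rows (ℓ_{1,2} norm). -/
def l12Norm {a b : ℕ} (X : Matrix (Fin a) (Fin b) ℝ) : ℝ :=
  ∑ i, Real.sqrt (∑ j, (X i j) ^ 2)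

/-- Nuclear norm: sum of the singular values of `X`. -/
def nuclearNorm {a b : ℕ} (X : Matrix (Fin a) (Fin b) ℝ) : ℝ :=
  ∑ i, Real.sqrt (((Matrix.isHermitian_conjTranspose_mul_self X : (Xᵀ * X).IsHermitian)).eigenvalues i)

/-- Spectral norm (ℓ₂ operator norm). -/
def specNorm {a b : ℕ} (X : Matrix (Fin a) (Fin b) ℝ) : ℝ :=
  sSup ((fun v => l2Norm (X.mulVec v)) '' {v | l2Norm v ≤ 1})

/-- Number of nonzero rows. -/
def rowSparsity {a b : ℕ} (X : Matrix (Fin a) (Fin b) ℝ) : ℕ :=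
  {i | X i ≠ 0}.ncard

/-- The set 𝕏_{k,r} of matrices with at most `k` nonzero rows and rank at most `r`. -/
def sparseLowRank (p₁ p₂ k r : ℕ) : Set (Matrix (Fin p₁) (Fin p₂) ℝ) :=
  {X | rowSparsity X ≤ k ∧ X.rank ≤ r}

/-- Gaussian measure on ℝⁿ with mean `μ` and covariance `σ² Iₙ`. -/
def gaussianPi (n : ℕ) (μ : Fin n → ℝ) (σ : ℝ) : Measure (Fin n → ℝ) :=
  Measure.pi fun i => ProbabilityTheory.gaussianReal (μ i) (Real.toNNReal (σ ^ 2))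

/-!
Write `E₁ = E - E₀` and `P_{U⊥} = 1 - UUᵀ`; orthogonality to `T₀` means
`E₁ = P_{U⊥} E₁ P_{V⊥}`. The nuclear norm is dual to the spectral norm: `⟨Y, X⟩ ≤ ‖X‖_*` for
every contraction `Y`, with equality when `Y` is the polar factor of `X`. With `Z` the polar
factor of `E₁`, the matrix `Y = UVᵀ + P_{U⊥} Z P_{V⊥}` is again a contraction (its two summands
live on orthogonal row and column spaces), `⟨Y, B*⟩ = ∑ sᵢ ≥ ‖B*‖_*` and `⟨Y, E₁⟩ = ‖E₁‖_*`,
so pairing `Y` with `B* + E₁ + E₀` gives `‖B*‖_* + ‖E₁‖_* - ‖E₀‖_* ≤ ‖B* + E‖_* ≤ ‖B*‖_*`.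

The second bound is Cauchy–Schwarz over the nonzero singular values,
`‖X‖_* ≤ √(rank X) ‖X‖_F`, together with `rank E₀ ≤ 2r` from `E₀ = UUᵀE₀ + P_{U⊥} E₀ VVᵀ`.
-/

section Contraction

open scoped ComplexOrder

variable {𝕜 : Type*} [RCLike 𝕜] {l m n : Type*} [Fintype m] [DecidableEq n]

def IsContraction (Y : Matrix m n 𝕜) : Prop := (1 - Yᴴ * Y).PosSemidef

lemma isContraction_of_conjTranspose_mul_self_eq_one {Y : Matrix m n 𝕜} (hY : Yᴴ * Y = 1) :
    IsContraction Y := by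
  rw [IsContraction, hY, sub_self]
  exact .zero

lemma isContraction_of_isStarProjection {P : Matrix m m 𝕜} [DecidableEq m]
    (hP : IsStarProjection P) : IsContraction P := by
  have hP' : Pᴴ = P := hP.isSelfAdjoint
  have hcompl : (1 - P)ᴴ = 1 - P := hP.one_sub.isSelfAdjoint
  rw [IsContraction, hP', hP.isIdempotentElem.eq, ← hP.one_sub.isIdempotentElem.eq]
  nth_rewrite 1 [← hcompl]
  exact posSemidef_conjTranspose_mul_self _

lemma IsContraction.mul [Fintype l] [Fintype n] [DecidableEq m] {A : Matrix l m 𝕜}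
    {B : Matrix m n 𝕜} (hA : IsContraction A) (hB : IsContraction B) :
    IsContraction (A * B) := by
  have h : 1 - (A * B)ᴴ * (A * B) = (1 - Bᴴ * B) + Bᴴ * (1 - Aᴴ * A) * B := by
    simp only [conjTranspose_mul, Matrix.mul_sub, Matrix.sub_mul, Matrix.mul_one,
      Matrix.mul_assoc]
    abel
  rw [IsContraction, h]
  exact hB.add (hA.conjTranspose_mul_mul_same B)

lemma IsContraction.neg {Y : Matrix m n 𝕜} (hY : IsContraction Y) : IsContraction (-Y) := by
  rwa [IsContraction, conjTranspose_neg, Matrix.neg_mul, Matrix.mul_neg, neg_neg]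

end Contraction

lemma diag_conjTranspose_mul_le {m n : Type*} [Fintype m] (M N : Matrix m n ℝ) (i : n) :
    (Mᴴ * N) i i ≤ √((Mᴴ * M) i i) * √((Nᴴ * N) i i) := by
  simpa [mul_apply, sq] using Real.sum_mul_le_sqrt_mul_sqrt Finset.univ (M · i) (N · i)

lemma trace_conjTranspose_mul_eq_sum {m n : Type*} [Fintype m] [Fintype n]
    (A B : Matrix m n ℝ) : trace (Aᴴ * B) = ∑ i, ∑ j, A i j * B i j := by
  simp only [trace, diag_apply, mul_apply, conjTranspose_apply, star_trivial]
  exact Finset.sum_comm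

section RealContraction

variable {m n : Type*} [Fintype m] [DecidableEq n]

lemma IsContraction.diag_le_one {M : Matrix m n ℝ} (hM : IsContraction M) (i : n) :
    (Mᴴ * M) i i ≤ 1 := by
  simpa using hM.diag_nonneg (i := i)

lemma IsContraction.diag_conjTranspose_mul_le_one {M N : Matrix m n ℝ} (hM : IsContraction M)
    (hN : IsContraction N) (i : n) : (Mᴴ * N) i i ≤ 1 :=
  calc (Mᴴ * N) i i ≤ √((Mᴴ * M) i i) * √((Nᴴ * N) i i) := diag_conjTranspose_mul_le M N i
    _ ≤ 1 * 1 := by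
      gcongr
      · exact Real.sqrt_le_one.mpr (hM.diag_le_one i)
      · exact Real.sqrt_le_one.mpr (hN.diag_le_one i)
    _ = 1 := one_mul 1

end RealContraction

section Projection

variable {𝕜 : Type*} [RCLike 𝕜] {m n r : Type*} [Fintype r] [DecidableEq m]

def complProj (U : Matrix m r 𝕜) : Matrix m m 𝕜 := 1 - U * Uᴴ

lemma conjTranspose_complProj (U : Matrix m r 𝕜) : (complProj U)ᴴ = complProj U := by
  simp [complProj]

variable [Fintype m] [DecidableEq r] {U : Matrix m r 𝕜}

lemma isStarProjection_complProj (hU : Uᴴ * U = 1) : IsStarProjection (complProj U) :=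
  IsStarProjection.one_sub
    { isIdempotentElem := by
        rw [IsIdempotentElem, Matrix.mul_assoc, ← Matrix.mul_assoc Uᴴ, hU, Matrix.one_mul]
      isSelfAdjoint := by simp [IsSelfAdjoint, star_eq_conjTranspose] }

lemma complProj_mul_self (hU : Uᴴ * U = 1) : complProj U * U = 0 := by
  rw [complProj, Matrix.sub_mul, Matrix.mul_assoc, hU, Matrix.one_mul, Matrix.mul_one, sub_self]

lemma conjTranspose_mul_complProj (hU : Uᴴ * U = 1) : Uᴴ * complProj U = 0 := by
  rw [← conjTranspose_complProj, ← conjTranspose_mul, complProj_mul_self hU, conjTranspose_zero]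

end Projection

section Orthogonality

open scoped ComplexOrder

variable {𝕜 : Type*} [RCLike 𝕜] {m n : Type*} [Fintype m] [Fintype n]

lemma eq_mul_mul_of_forall_trace_eq_zero {P : Matrix m m 𝕜} {Q : Matrix n n 𝕜}
    (hP : IsStarProjection P) (hQ : IsStarProjection Q) {E : Matrix m n 𝕜}
    (hE : ∀ B : Matrix m n 𝕜, P * B * Q = 0 → trace (Eᴴ * B) = 0) : P * E * Q = E := by
  have hP' : Pᴴ = P := hP.isSelfAdjoint
  have hQ' : Qᴴ = Q := hQ.isSelfAdjoint
  set C := E - P * E * Q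
  have hC : P * C * Q = 0 := by
    simp only [C, Matrix.mul_sub, Matrix.sub_mul, ← Matrix.mul_assoc, hP.isIdempotentElem.eq]
    simp only [Matrix.mul_assoc, hQ.isIdempotentElem.eq, sub_self]
  have hPEQ : trace ((P * E * Q)ᴴ * C) = 0 := by
    rw [conjTranspose_mul, conjTranspose_mul, hP', hQ', Matrix.mul_assoc, trace_mul_comm,
      Matrix.mul_assoc, Matrix.mul_assoc, ← Matrix.mul_assoc P, hC, Matrix.mul_zero, trace_zero]
  have hCC : trace (Cᴴ * C) = 0 := by
    rw [conjTranspose_sub, Matrix.sub_mul, trace_sub, hE C hC, hPEQ, sub_self]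
  rw [trace_conjTranspose_mul_self_eq_zero_iff, sub_eq_zero] at hCC
  exact hCC.symm

end Orthogonality

section Certificate

open scoped ComplexOrder

variable {𝕜 : Type*} [RCLike 𝕜] {m n r : Type*} [Fintype m] [Fintype n] [Fintype r]
  [DecidableEq m] [DecidableEq n] [DecidableEq r]

lemma isContraction_mul_conjTranspose_add_complProj {U : Matrix m r 𝕜} {V : Matrix n r 𝕜}
    (hU : Uᴴ * U = 1) (hV : Vᴴ * V = 1) {Z : Matrix m n 𝕜} (hZ : IsContraction Z) :
    IsContraction (U * Vᴴ + complProj U * Z * complProj V) := by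
  set P := complProj U
  set Q := complProj V
  have hPZ : IsContraction (P * Z) :=
    (isContraction_of_isStarProjection (isStarProjection_complProj hU)).mul hZ
  have hgram : (U * Vᴴ + P * Z * Q)ᴴ * (U * Vᴴ + P * Z * Q)
      = V * Vᴴ + Qᴴ * ((P * Z)ᴴ * (P * Z)) * Q := by
    simp only [conjTranspose_add, conjTranspose_mul, conjTranspose_conjTranspose,
      Matrix.add_mul, Matrix.mul_add, Matrix.mul_assoc]
    rw [← Matrix.mul_assoc Uᴴ U, hU, Matrix.one_mul, ← Matrix.mul_assoc Uᴴ P,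
      conjTranspose_mul_complProj hU, ← Matrix.mul_assoc Pᴴ U, conjTranspose_complProj U,
      complProj_mul_self hU]
    simp only [Matrix.zero_mul, Matrix.mul_zero, add_zero, zero_add]
  have hQ : Qᴴ * Q = 1 - V * Vᴴ := by
    rw [conjTranspose_complProj, (isStarProjection_complProj hV).isIdempotentElem.eq, complProj]
  rw [IsContraction, hgram, sub_add_eq_sub_sub, ← hQ]
  convert hPZ.conjTranspose_mul_mul_same Q using 1
  simp only [Matrix.mul_sub, Matrix.sub_mul, Matrix.mul_one, Matrix.mul_assoc]

end Certificate

section Duality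

variable {a b : ℕ}

def gramEigenvalues (X : Matrix (Fin a) (Fin b) ℝ) : Fin b → ℝ :=
  (isHermitian_conjTranspose_mul_self X).eigenvalues

def gramEigenvectors (X : Matrix (Fin a) (Fin b) ℝ) : Matrix (Fin b) (Fin b) ℝ :=
  (isHermitian_conjTranspose_mul_self X).eigenvectorUnitary

lemma nuclearNorm_eq_sum_sqrt_gramEigenvalues (X : Matrix (Fin a) (Fin b) ℝ) :
    nuclearNorm X = ∑ i, √(gramEigenvalues X i) := rfl

lemma gramEigenvalues_nonneg (X : Matrix (Fin a) (Fin b) ℝ) (i : Fin b) :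
    0 ≤ gramEigenvalues X i :=
  (posSemidef_conjTranspose_mul_self X).eigenvalues_nonneg i

lemma gramEigenvectors_mul_conjTranspose (X : Matrix (Fin a) (Fin b) ℝ) :
    gramEigenvectors X * (gramEigenvectors X)ᴴ = 1 :=
  Unitary.mul_star_self_of_mem (isHermitian_conjTranspose_mul_self X).eigenvectorUnitary.2

lemma conjTranspose_gramEigenvectors_mul (X : Matrix (Fin a) (Fin b) ℝ) :
    (gramEigenvectors X)ᴴ * gramEigenvectors X = 1 :=
  Unitary.star_mul_self_of_mem (isHermitian_conjTranspose_mul_self X).eigenvectorUnitary.2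

lemma conjTranspose_mul_gramEigenvectors (X : Matrix (Fin a) (Fin b) ℝ) :
    (X * gramEigenvectors X)ᴴ * (X * gramEigenvectors X) = diagonal (gramEigenvalues X) := by
  have h := (isHermitian_conjTranspose_mul_self X).conjStarAlgAut_star_eigenvectorUnitary
  simp only [Unitary.conjStarAlgAut_apply] at h
  simpa [gramEigenvectors, gramEigenvalues, Matrix.mul_assoc, star_eq_conjTranspose] using h

lemma trace_conjTranspose_mul_le_nuclearNorm (X Y : Matrix (Fin a) (Fin b) ℝ)
    (hY : IsContraction Y) : trace (Yᴴ * X) ≤ nuclearNorm X := by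
  set W := gramEigenvectors X
  have hYW : IsContraction (Y * W) :=
    hY.mul (isContraction_of_conjTranspose_mul_self_eq_one (conjTranspose_gramEigenvectors_mul X))
  calc trace (Yᴴ * X) = trace ((Y * W)ᴴ * (X * W)) := by
        rw [conjTranspose_mul, Matrix.mul_assoc, trace_mul_cycle', ← Matrix.mul_assoc,
          Matrix.mul_assoc X, gramEigenvectors_mul_conjTranspose, Matrix.mul_one, trace_mul_comm]
    _ ≤ ∑ i, √(((Y * W)ᴴ * (Y * W)) i i) * √(((X * W)ᴴ * (X * W)) i i) :=
        Finset.sum_le_sum fun i _ => diag_conjTranspose_mul_le _ _ i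
    _ ≤ ∑ i, √(gramEigenvalues X i) := by
        refine Finset.sum_le_sum fun i _ => ?_
        rw [conjTranspose_mul_gramEigenvectors, diagonal_apply_eq]
        exact mul_le_of_le_one_left (Real.sqrt_nonneg _)
          (Real.sqrt_le_one.mpr (hYW.diag_le_one i))

lemma exists_isContraction_trace_eq_nuclearNorm (X : Matrix (Fin a) (Fin b) ℝ) :
    ∃ Z : Matrix (Fin a) (Fin b) ℝ, IsContraction Z ∧ trace (Zᴴ * X) = nuclearNorm X := by
  set W := gramEigenvectors X
  set d := gramEigenvalues X
  -- Since `(√0)⁻¹ = 0`, `X * W * g * Wᴴ` is the polar factor of `X`, vanishing on its kernel.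
  set g : Matrix (Fin b) (Fin b) ℝ := diagonal fun i => (√(d i))⁻¹
  have hXWg : IsContraction (X * W * g) := by
    have h : 1 - (X * W * g)ᴴ * (X * W * g) = diagonal fun i => 1 - d i / √(d i) ^ 2 := by
      rw [conjTranspose_mul, Matrix.mul_assoc, ← Matrix.mul_assoc (X * W)ᴴ,
        conjTranspose_mul_gramEigenvectors, diagonal_conjTranspose, diagonal_mul_diagonal,
        diagonal_mul_diagonal, ← diagonal_one, diagonal_sub]
      congr 1; ext i; simp [div_eq_mul_inv, sq]; ring
    rw [IsContraction, h]
    refine PosSemidef.diagonal fun i => ?_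
    rw [Real.sq_sqrt (gramEigenvalues_nonneg X i), Pi.zero_apply, sub_nonneg]
    exact div_self_le_one _
  refine ⟨X * W * g * Wᴴ, hXWg.mul ?_, ?_⟩
  · exact isContraction_of_conjTranspose_mul_self_eq_one (by
      rw [conjTranspose_conjTranspose, gramEigenvectors_mul_conjTranspose])
  · rw [conjTranspose_mul, conjTranspose_conjTranspose, conjTranspose_mul, trace_mul_cycle,
      trace_mul_comm, Matrix.mul_assoc, conjTranspose_mul_gramEigenvectors,
      diagonal_conjTranspose, diagonal_mul_diagonal, trace_diagonal,
      nuclearNorm_eq_sum_sqrt_gramEigenvalues]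
    refine Finset.sum_congr rfl fun i _ => ?_
    rw [star_trivial, ← div_eq_inv_mul, Real.div_sqrt]

end Duality
section NuclearNorm

variable {a b : ℕ} {r : Type*} [Fintype r] [DecidableEq r]

lemma nuclearNorm_mul_diagonal_mul_le {U : Matrix (Fin a) r ℝ} {V : Matrix (Fin b) r ℝ}
    (hU : IsContraction U) (hV : IsContraction V) {s : r → ℝ} (hs : ∀ i, 0 ≤ s i) :
    nuclearNorm (U * diagonal s * Vᴴ) ≤ ∑ i, s i := by
  obtain ⟨Z, hZ, hZX⟩ := exists_isContraction_trace_eq_nuclearNorm (U * diagonal s * Vᴴ)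
  rw [← hZX, trace_mul_cycle', ← Matrix.mul_assoc, ← Matrix.mul_assoc, ← conjTranspose_mul]
  simp only [trace, diag_apply, mul_diagonal]
  exact Finset.sum_le_sum fun i _ =>
    mul_le_of_le_one_left (hs i) ((hZ.mul hV).diag_conjTranspose_mul_le_one hU i)

lemma sum_add_nuclearNorm_le {U : Matrix (Fin a) r ℝ} {V : Matrix (Fin b) r ℝ}
    (hU : Uᴴ * U = 1) (hV : Vᴴ * V = 1) (s : r → ℝ) {E D : Matrix (Fin a) (Fin b) ℝ}
    (hE : complProj U * E * complProj V = E) :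
    ∑ i, s i + nuclearNorm E ≤ nuclearNorm (U * diagonal s * Vᴴ + E + D) + nuclearNorm D := by
  obtain ⟨Z, hZ, hZE⟩ := exists_isContraction_trace_eq_nuclearNorm E
  set Y := U * Vᴴ + complProj U * Z * complProj V
  have hY : IsContraction Y := isContraction_mul_conjTranspose_add_complProj hU hV hZ
  have hYB : trace (Yᴴ * (U * diagonal s * Vᴴ)) = ∑ i, s i := by
    simp only [Y, conjTranspose_add, conjTranspose_mul, conjTranspose_conjTranspose,
      conjTranspose_complProj, Matrix.add_mul, Matrix.mul_assoc, trace_add]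
    rw [← Matrix.mul_assoc Uᴴ U, hU, ← Matrix.mul_assoc (complProj U) U, complProj_mul_self hU]
    simp only [Matrix.one_mul, Matrix.zero_mul, Matrix.mul_zero, trace_zero, add_zero]
    rw [trace_mul_comm, Matrix.mul_assoc, hV, Matrix.mul_one, trace_diagonal]
  have hYE : trace (Yᴴ * E) = nuclearNorm E := by
    conv_lhs => rw [← hE]
    simp only [Y, conjTranspose_add, conjTranspose_mul, conjTranspose_conjTranspose,
      conjTranspose_complProj, Matrix.add_mul, Matrix.mul_assoc, trace_add]
    rw [← Matrix.mul_assoc Uᴴ (complProj U), conjTranspose_mul_complProj hU,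
      ← Matrix.mul_assoc (complProj U) (complProj U),
      (isStarProjection_complProj hU).isIdempotentElem.eq]
    simp only [Matrix.zero_mul, Matrix.mul_zero, trace_zero, zero_add]
    rw [trace_mul_comm, Matrix.mul_assoc, Matrix.mul_assoc, Matrix.mul_assoc,
      (isStarProjection_complProj hV).isIdempotentElem.eq,
      ← Matrix.mul_assoc (complProj U), hE, hZE]
  have hupper := trace_conjTranspose_mul_le_nuclearNorm (U * diagonal s * Vᴴ + E + D) Y hY
  have hlower := trace_conjTranspose_mul_le_nuclearNorm D (-Y) hY.neg
  rw [Matrix.mul_add, Matrix.mul_add, trace_add, trace_add, hYB, hYE] at hupper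
  rw [conjTranspose_neg, Matrix.neg_mul, trace_neg] at hlower
  linarith

end NuclearNorm

section Rank

variable {K : Type*} [Field K] {m n r s : Type*} [Fintype n] [Fintype r] [Fintype s]

lemma Matrix.rank_add_le (A B : Matrix m n K) : (A + B).rank ≤ A.rank + B.rank := by
  unfold Matrix.rank
  rw [Matrix.mulVecLin_add]
  exact (Submodule.finrank_mono (LinearMap.range_add_le _ _)).trans
    (Submodule.finrank_add_le_finrank_add_finrank _ _)

lemma rank_le_card_add_card_of_one_sub_mul_mul_one_sub_mul_eq_zero [Fintype m] [DecidableEq m]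
    [DecidableEq n] {A : Matrix m r K} {B : Matrix r m K} {C : Matrix n s K} {D : Matrix s n K}
    {E : Matrix m n K} (h : (1 - A * B) * E * (1 - C * D) = 0) :
    E.rank ≤ Fintype.card r + Fintype.card s := by
  have hE : E = A * (B * E) + (1 - A * B) * E * C * D := by
    rw [Matrix.mul_sub, Matrix.mul_one, sub_eq_zero] at h
    rw [Matrix.mul_assoc _ C D, ← h, Matrix.sub_mul, Matrix.one_mul, Matrix.mul_assoc,
      add_sub_cancel]
  rw [hE]
  exact (Matrix.rank_add_le _ _).trans (add_le_add
    ((rank_mul_le_left _ _).trans (rank_le_card_width _))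
    ((rank_mul_le_right _ _).trans (rank_le_card_height _)))

end Rank

section FrobeniusNorm

variable {a b : ℕ}

lemma frobNorm_eq_sqrt_sum_gramEigenvalues (X : Matrix (Fin a) (Fin b) ℝ) :
    frobNorm X = √(∑ i, gramEigenvalues X i) := by
  have h := (isHermitian_conjTranspose_mul_self X).trace_eq_sum_eigenvalues
  simp only [RCLike.ofReal_real_eq_id, id] at h
  rw [frobNorm, gramEigenvalues, ← h, trace_conjTranspose_mul_eq_sum]
  simp only [sq]

lemma rank_eq_card_gramEigenvalues_ne_zero (X : Matrix (Fin a) (Fin b) ℝ) :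
    X.rank = Fintype.card {i // gramEigenvalues X i ≠ 0} := by
  rw [← rank_conjTranspose_mul_self,
    (isHermitian_conjTranspose_mul_self X).rank_eq_card_non_zero_eigs]
  rfl

lemma nuclearNorm_le_sqrt_rank_mul_frobNorm (X : Matrix (Fin a) (Fin b) ℝ) :
    nuclearNorm X ≤ √(X.rank) * frobNorm X := by
  set d := gramEigenvalues X
  have hsupp : ∀ i, √(d i) = √(if d i ≠ 0 then 1 else 0) * √(d i) := fun i => by
    split_ifs with h <;> simp_all
  calc nuclearNorm X = ∑ i, √(if d i ≠ 0 then 1 else 0) * √(d i) :=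
        Finset.sum_congr rfl fun i _ => hsupp i
    _ ≤ √(∑ i, if d i ≠ 0 then (1 : ℝ) else 0) * √(∑ i, d i) :=
        Real.sum_sqrt_mul_sqrt_le _ (fun i => by positivity) (gramEigenvalues_nonneg X)
    _ = √(X.rank) * frobNorm X := by
        rw [Finset.sum_boole, rank_eq_card_gramEigenvalues_ne_zero, Fintype.card_subtype,
          frobNorm_eq_sqrt_sum_gramEigenvalues]

end FrobeniusNorm

theorem error_cone_condition_general
    (m p₂ r : ℕ) (Bstar : Matrix (Fin m) (Fin p₂) ℝ)
    (U : Matrix (Fin m) (Fin r) ℝ) (V : Matrix (Fin p₂) (Fin r) ℝ) (s : Fin r → ℝ)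
    (hU : Uᵀ * U = 1) (hV : Vᵀ * V = 1) (hs : ∀ i, 0 < s i)
    (hSVD : Bstar = U * Matrix.diagonal s * Vᵀ)
    (E E₀ : Matrix (Fin m) (Fin p₂) ℝ)
    -- `E₀` belongs to the subspace `T₀`
    (hE₀mem : (1 - U * Uᵀ) * E₀ * (1 - V * Vᵀ) = 0)
    -- `E - E₀` is orthogonal to `T₀` w.r.t. the trace inner product
    (hproj : ∀ B : Matrix (Fin m) (Fin p₂) ℝ, (1 - U * Uᵀ) * B * (1 - V * Vᵀ) = 0 →
      ∑ i, ∑ j, (E - E₀) i j * B i j = 0)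
    (hopt : nuclearNorm (Bstar + E) ≤ nuclearNorm Bstar) :
    nuclearNorm (E - E₀) ≤ nuclearNorm E₀ ∧
    nuclearNorm E₀ ≤ Real.sqrt (2 * r) * frobNorm E₀ := by
  simp only [← conjTranspose_eq_transpose_of_trivial] at hU hV hSVD hE₀mem hproj
  have hE₁ : complProj U * (E - E₀) * complProj V = E - E₀ :=
    eq_mul_mul_of_forall_trace_eq_zero (isStarProjection_complProj hU)
      (isStarProjection_complProj hV) fun B hB => by
        rw [trace_conjTranspose_mul_eq_sum]
        exact hproj B hB
  constructor
  · have hcert := sum_add_nuclearNorm_le hU hV s (D := E₀) hE₁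
    have hBstar := nuclearNorm_mul_diagonal_mul_le
      (isContraction_of_conjTranspose_mul_self_eq_one hU)
      (isContraction_of_conjTranspose_mul_self_eq_one hV) fun i => (hs i).le
    rw [add_assoc, sub_add_cancel, ← hSVD] at hcert
    rw [← hSVD] at hBstar
    linarith
  · have hrank : (E₀.rank : ℝ) ≤ 2 * r := by
      have := rank_le_card_add_card_of_one_sub_mul_mul_one_sub_mul_eq_zero hE₀mem
      rw [Fintype.card_fin] at this
      exact_mod_cast this.trans_eq (two_mul r).symm
    calc nuclearNorm E₀ ≤ √(E₀.rank) * frobNorm E₀ := nuclearNorm_le_sqrt_rank_mul_frobNorm E₀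
      _ ≤ √(2 * r) * frobNorm E₀ :=
        mul_le_mul_of_nonneg_right (Real.sqrt_le_sqrt hrank) (Real.sqrt_nonneg _)

/-- cone condition for the error of a nuclear-norm minimizer. -/
theorem error_cone_condition
    (m p₂ r : ℕ) (Bstar : Matrix (Fin m) (Fin p₂) ℝ)
    (U : Matrix (Fin m) (Fin r) ℝ) (V : Matrix (Fin p₂) (Fin r) ℝ) (s : Fin r → ℝ)
    (hrank : Bstar.rank = r)
    (hU : Uᵀ * U = 1) (hV : Vᵀ * V = 1) (hs : ∀ i, 0 < s i)
    (hSVD : Bstar = U * Matrix.diagonal s * Vᵀ)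
    (E E₀ : Matrix (Fin m) (Fin p₂) ℝ)
    -- `E₀` belongs to the subspace `T₀`
    (hE₀mem : (1 - U * Uᵀ) * E₀ * (1 - V * Vᵀ) = 0)
    -- `E - E₀` is orthogonal to `T₀` w.r.t. the trace inner product
    (hproj : ∀ B : Matrix (Fin m) (Fin p₂) ℝ, (1 - U * Uᵀ) * B * (1 - V * Vᵀ) = 0 →
      ∑ i, ∑ j, (E - E₀) i j * B i j = 0)
    (hopt : nuclearNorm (Bstar + E) ≤ nuclearNorm Bstar) :
    nuclearNorm (E - E₀) ≤ nuclearNorm E₀ ∧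
    nuclearNorm E₀ ≤ Real.sqrt (2 * r) * frobNorm E₀ :=
  error_cone_condition_general m p₂ r Bstar U V s hU hV hs hSVD E E₀ hE₀mem hproj hopt
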